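/- Let Φ and Ψ be functions on [0,∞) that are conjugate in the sense of Young, i.e. a·b ≤ Φ(a) + Ψ(b) for all a,b ≥ 0, and suppose there exists a nondecreasing sequence Λ = {λ_n} of positive numbers with λ_n → ∞ such that ∑_{n=1}^∞ Ψ(1/λ_n) < ∞ and ∑_{n=1}^∞ λ_n/n² < ∞ (e.g. λ_n = n·γ_n with γ_n nonincreasing and ∑ γ_n/n < ∞). Then every f ∈ PBV_Φ belongs to HBV. -/

import Mathlib

open Real Filter Topology MeasureTheory
open scoped ENNReal NNReal BigOperators

noncomputable section

/-- `f` is `2π`-periodic in each variable. -/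
def Periodic2 (f : ℝ → ℝ → ℝ) : Prop :=
  ∀ x y : ℝ, f (x + 2 * π) y = f x y ∧ f x (y + 2 * π) = f x y

/-- A finite family of pairwise nonoverlapping (nondegenerate) subintervals of `[0, 2π]`,
each interval given by its pair (left endpoint, right endpoint). -/
def Nonoverlapping {n : ℕ} (I : Fin n → ℝ × ℝ) : Prop :=
  (∀ i, 0 ≤ (I i).1 ∧ (I i).1 < (I i).2 ∧ (I i).2 ≤ 2 * π) ∧
  (∀ i j, i ≠ j → (I i).2 ≤ (I j).1 ∨ (I j).2 ≤ (I i).1)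

/-- `f(I, y) = f(b, y) - f(a, y)` for `I = (a, b)`. -/
def incr1 (f : ℝ → ℝ → ℝ) (I : ℝ × ℝ) (y : ℝ) : ℝ := f I.2 y - f I.1 y

/-- `f(x, J) = f(x, d) - f(x, c)` for `J = (c, d)`. -/
def incr2 (f : ℝ → ℝ → ℝ) (x : ℝ) (J : ℝ × ℝ) : ℝ := f x J.2 - f x J.1

/-- The mixed difference `f(I, J)` for `I = (a, b)`, `J = (c, d)`. -/
def incr12 (f : ℝ → ℝ → ℝ) (I J : ℝ × ℝ) : ℝ :=
  f I.1 J.1 - f I.1 J.2 - f I.2 J.1 + f I.2 J.2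

/-- `ΛV₁(f)`: the partial `Λ`-variation of `f` in the first variable. -/
def Var1 (Λ : ℕ → ℝ) (f : ℝ → ℝ → ℝ) : ℝ≥0∞ :=
  ⨆ (y : ℝ) (n : ℕ) (I : {I : Fin n → ℝ × ℝ // Nonoverlapping I}),
    ∑ i : Fin n, ENNReal.ofReal (|incr1 f (I.1 i) y| / Λ (i.1 + 1))

/-- `ΛV₂(f)`: the partial `Λ`-variation of `f` in the second variable. -/
def Var2 (Λ : ℕ → ℝ) (f : ℝ → ℝ → ℝ) : ℝ≥0∞ :=
  ⨆ (x : ℝ) (m : ℕ) (J : {J : Fin m → ℝ × ℝ // Nonoverlapping J}),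
    ∑ j : Fin m, ENNReal.ofReal (|incr2 f x (J.1 j)| / Λ (j.1 + 1))

/-- `ΛV₁,₂(f)`: the mixed `Λ`-variation of `f`. -/
def Var12 (Λ : ℕ → ℝ) (f : ℝ → ℝ → ℝ) : ℝ≥0∞ :=
  ⨆ (n : ℕ) (m : ℕ) (I : {I : Fin n → ℝ × ℝ // Nonoverlapping I})
    (J : {J : Fin m → ℝ × ℝ // Nonoverlapping J}),
    ∑ i : Fin n, ∑ j : Fin m,
      ENNReal.ofReal (|incr12 f (I.1 i) (J.1 j)| / (Λ (i.1 + 1) * Λ (j.1 + 1)))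

/-- The harmonic sequence `λ_n = n` (giving harmonic variation `HV`). -/
def harmonicSeq : ℕ → ℝ := fun n => (n : ℝ)

/-- The constant sequence `λ_n = 1` (giving ordinary (Hardy) variation). -/
def oneSeq : ℕ → ℝ := fun _ => 1

/-- The partial modulus of variation `v₁(n, f)`. -/
def modulus1 (f : ℝ → ℝ → ℝ) (n : ℕ) : ℝ≥0∞ :=
  ⨆ (y : ℝ) (I : {I : Fin n → ℝ × ℝ // Nonoverlapping I}),
    ∑ i : Fin n, ENNReal.ofReal |incr1 f (I.1 i) y|

/-- The partial modulus of variation `v₂(m, f)`. -/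
def modulus2 (f : ℝ → ℝ → ℝ) (m : ℕ) : ℝ≥0∞ :=
  ⨆ (x : ℝ) (J : {J : Fin m → ℝ × ℝ // Nonoverlapping J}),
    ∑ j : Fin m, ENNReal.ofReal |incr2 f x (J.1 j)|

/-- The `Λ`-variation of a function of one variable on `[0, 2π]`. -/
def VarG (Λ : ℕ → ℝ) (g : ℝ → ℝ) : ℝ≥0∞ :=
  ⨆ (n : ℕ) (I : {I : Fin n → ℝ × ℝ // Nonoverlapping I}),
    ∑ i : Fin n, ENNReal.ofReal (|g (I.1 i).2 - g (I.1 i).1| / Λ (i.1 + 1))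

/-- The norm `‖f‖_C + ΛV₁(f) + ΛV₂(f)` (with values in `ℝ≥0∞`). -/
def PNorm (Λ : ℕ → ℝ) (f : ℝ → ℝ → ℝ) : ℝ≥0∞ :=
  (⨆ (x : ℝ) (y : ℝ), ENNReal.ofReal |f x y|) + Var1 Λ f + Var2 Λ f

/-- The Fourier coefficient `f̂(m, n)` of a (`2π`-periodic in each variable) function. -/
def fourierCoef (f : ℝ → ℝ → ℝ) (m n : ℤ) : ℂ :=
  (1 / (4 * (π : ℂ) ^ 2)) *
    ∫ x in (0:ℝ)..(2 * π), ∫ y in (0:ℝ)..(2 * π),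
      (f x y : ℂ) * Complex.exp (-Complex.I * m * x) * Complex.exp (-Complex.I * n * y)

/-- The rectangular partial sum `S_{M,N}[f](x, y)` of the double Fourier series of `f`. -/
def partialSum (f : ℝ → ℝ → ℝ) (M N : ℕ) (x y : ℝ) : ℂ :=
  ∑ m ∈ Finset.Icc (-(M : ℤ)) (M : ℤ), ∑ n ∈ Finset.Icc (-(N : ℤ)) (N : ℤ),
    fourierCoef f m n * Complex.exp (Complex.I * m * x) * Complex.exp (Complex.I * n * y)

/-- Pringsheim convergence of the rectangular partial sums at `(x, y)` to `L`. -/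
def PringsheimConv (f : ℝ → ℝ → ℝ) (x y L : ℝ) : Prop :=
  ∀ ε : ℝ, 0 < ε → ∃ N₀ : ℕ, ∀ M N : ℕ, N₀ ≤ M → N₀ ≤ N →
    ‖partialSum f M N x y - (L : ℂ)‖ < ε

/-- The four open-quadrant limits `f(x±0, y±0)` exist and equal `Lpp, Lpm, Lmp, Lmm`. -/
def QuadLimits (f : ℝ → ℝ → ℝ) (x y Lpp Lpm Lmp Lmm : ℝ) : Prop :=
  Tendsto (fun p : ℝ × ℝ => f p.1 p.2) ((𝓝[>] x) ×ˢ (𝓝[>] y)) (𝓝 Lpp) ∧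
  Tendsto (fun p : ℝ × ℝ => f p.1 p.2) ((𝓝[>] x) ×ˢ (𝓝[<] y)) (𝓝 Lpm) ∧
  Tendsto (fun p : ℝ × ℝ => f p.1 p.2) ((𝓝[<] x) ×ˢ (𝓝[>] y)) (𝓝 Lmp) ∧
  Tendsto (fun p : ℝ × ℝ => f p.1 p.2) ((𝓝[<] x) ×ˢ (𝓝[<] y)) (𝓝 Lmm)

/-!
Young's inequality `a / λ ≤ Φ a + Ψ (1 / λ)` bounds every `Λ`-weighted variation sum of `f` by
its `Φ`-variation plus `∑ Ψ (1 / λ_n)`. Since `λ` is nondecreasing and `∑ λ_n / n² < ∞`,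
`λ_n = O(n)`, so `1 / n = O(1 / λ_n)` and the harmonic variations in each variable are controlled
by the `Λ`-variations. For the mixed variation, `|f(I, J)| ≤ |f(I, c)| + |f(I, d)|` shows that
every row and every column of the array `|f(I_i, J_j)|` has bounded `Λ`-weighted sum, and AM-GM
splits `1 / (i j) ≤ (λ_i / (i² λ_j) + λ_j / (j² λ_i)) / 2`; the resulting factors
`∑ λ_i / i²` are bounded.
-/

theorem sum_fin_le_tsum {g : ℕ → ℝ} (hg : ∀ k, 0 ≤ g k) (hs : Summable g) (n : ℕ) :
    ∑ i : Fin n, g i ≤ ∑' k, g k := by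
  rw [Fin.sum_univ_eq_sum_range g n]
  exact hs.sum_le_tsum _ fun k _ => hg k

theorem sum_mul_le_mul {ι : Type*} [Fintype ι] {a b : ι → ℝ} {A B : ℝ} (ha : ∀ i, 0 ≤ a i)
    (hb : ∀ i, b i ≤ B) (hA : ∑ i, a i ≤ A) (hB : 0 ≤ B) : ∑ i, a i * b i ≤ A * B :=
  calc ∑ i, a i * b i ≤ ∑ i, a i * B :=
        Finset.sum_le_sum fun i _ => mul_le_mul_of_nonneg_left (hb i) (ha i)
    _ = (∑ i, a i) * B := (Finset.sum_mul _ _ _).symm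
    _ ≤ A * B := mul_le_mul_of_nonneg_right hA hB

theorem sum_div_le_mul_sum_div {ι : Type*} [Fintype ι] {d u α : ι → ℝ} {c : ℝ}
    (hd : ∀ i, 0 ≤ d i) (hu : ∀ i, 0 < u i) (hα : ∀ i, 0 < α i) (huα : ∀ i, u i ≤ c * α i) :
    ∑ i, d i / α i ≤ c * ∑ i, d i / u i := by
  rw [Finset.mul_sum]
  refine Finset.sum_le_sum fun i _ => ?_
  rw [← mul_div_assoc, div_le_div_iff₀ (hα i) (hu i)]
  nlinarith [mul_le_mul_of_nonneg_left (huα i) (hd i)]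

theorem div_mul_le_half_add {d p q a b : ℝ} (hd : 0 ≤ d) (hp : 0 < p) (hq : 0 < q)
    (ha : 0 < a) (hb : 0 < b) :
    d / (a * b) ≤ (p / a ^ 2 * (d / q) + q / b ^ 2 * (d / p)) / 2 := by
  have hamgm : 2 * p * q * a * b ≤ p ^ 2 * b ^ 2 + q ^ 2 * a ^ 2 := by
    nlinarith [sq_nonneg (p * b - q * a)]
  calc d / (a * b) = d * (2 * p * q * a * b) / (2 * p * q * a ^ 2 * b ^ 2) := by
        field_simp
    _ ≤ d * (p ^ 2 * b ^ 2 + q ^ 2 * a ^ 2) / (2 * p * q * a ^ 2 * b ^ 2) := by gcongr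
    _ = (p / a ^ 2 * (d / q) + q / b ^ 2 * (d / p)) / 2 := by
        field_simp

theorem sum_sum_div_mul_le {ι κ : Type*} [Fintype ι] [Fintype κ] {d : ι → κ → ℝ}
    {u α : ι → ℝ} {v β : κ → ℝ} {R C Tu Tv : ℝ} (hd : ∀ i j, 0 ≤ d i j)
    (hu : ∀ i, 0 < u i) (hv : ∀ j, 0 < v j) (hα : ∀ i, 0 < α i) (hβ : ∀ j, 0 < β j)
    (hrow : ∀ j, ∑ i, d i j / u i ≤ R) (hcol : ∀ i, ∑ j, d i j / v j ≤ C)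
    (hR : 0 ≤ R) (hC : 0 ≤ C)
    (hTu : ∑ i, u i / α i ^ 2 ≤ Tu) (hTv : ∑ j, v j / β j ^ 2 ≤ Tv) :
    ∑ i, ∑ j, d i j / (α i * β j) ≤ (Tu * C + Tv * R) / 2 := by
  have hsplit : ∑ i, ∑ j, d i j / (α i * β j) ≤
      ((∑ i, u i / α i ^ 2 * ∑ j, d i j / v j) + ∑ j, v j / β j ^ 2 * ∑ i, d i j / u i) / 2 := by
    simp_rw [Finset.mul_sum]
    rw [Finset.sum_comm (f := fun j i => v j / β j ^ 2 * (d i j / u i)),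
      ← Finset.sum_add_distrib, Finset.sum_div]
    refine Finset.sum_le_sum fun i _ => ?_
    rw [← Finset.sum_add_distrib, Finset.sum_div]
    exact Finset.sum_le_sum fun j _ =>
      div_mul_le_half_add (hd i j) (hu i) (hv j) (hα i) (hβ j)
  refine hsplit.trans ?_
  gcongr
  · exact sum_mul_le_mul (fun i => div_nonneg (hu i).le (sq_nonneg _)) hcol hTu hC
  · exact sum_mul_le_mul (fun j => div_nonneg (hv j).le (sq_nonneg _)) hrow hTv hR

theorem le_four_tsum_mul_of_monotone {a : ℕ → ℝ} (ha : Monotone a) (h0 : ∀ n, 0 ≤ a n)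
    (hs : Summable fun n => a n / ((n : ℝ) + 1) ^ 2) (n : ℕ) :
    a n ≤ 4 * (∑' k, a k / ((k : ℝ) + 1) ^ 2) * ((n : ℝ) + 1) := by
  set T := ∑' k, a k / ((k : ℝ) + 1) ^ 2
  have hterm : ∀ k ∈ Finset.Icc n (2 * n),
      a n / (4 * ((n : ℝ) + 1) ^ 2) ≤ a k / ((k : ℝ) + 1) ^ 2 := by
    intro k hk
    rw [Finset.mem_Icc] at hk
    have hk2 : (k : ℝ) ≤ 2 * n := by exact_mod_cast hk.2
    apply div_le_div₀ (h0 k) (ha hk.1) (by positivity)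
    nlinarith [Nat.cast_nonneg (α := ℝ) k]
  have hblock : ((n : ℝ) + 1) * (a n / (4 * ((n : ℝ) + 1) ^ 2)) ≤ T := by
    have hcard := Finset.card_nsmul_le_sum _ _ _ hterm
    rw [Nat.card_Icc, show 2 * n + 1 - n = n + 1 by omega, nsmul_eq_mul] at hcard
    push_cast at hcard
    exact hcard.trans (hs.sum_le_tsum _ fun k _ => div_nonneg (h0 k) (sq_nonneg _))
  calc a n = 4 * (((n : ℝ) + 1) * (a n / (4 * ((n : ℝ) + 1) ^ 2))) * ((n : ℝ) + 1) := by
        field_simp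
    _ ≤ 4 * T * ((n : ℝ) + 1) := by gcongr

def YoungPair (Φ Ψ : ℝ → ℝ) : Prop :=
  ∀ a b : ℝ, 0 ≤ a → 0 ≤ b → a * b ≤ Φ a + Ψ b

namespace YoungPair

variable {Φ Ψ : ℝ → ℝ}

theorem nonneg_right (hY : YoungPair Φ Ψ) (hΦ0 : Φ 0 = 0) {b : ℝ} (hb : 0 ≤ b) : 0 ≤ Ψ b := by
  simpa [hΦ0] using hY 0 b le_rfl hb

theorem div_le (hY : YoungPair Φ Ψ) {a l : ℝ} (ha : 0 ≤ a) (hl : 0 < l) :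
    a / l ≤ Φ a + Ψ (1 / l) := by
  simpa only [mul_one_div] using hY a (1 / l) ha (one_div_nonneg.2 hl.le)

theorem sum_div_le (hY : YoungPair Φ Ψ) (hΦ0 : Φ 0 = 0) {w : ℕ → ℝ} (hw : ∀ k, 0 < w k)
    (hΨ : Summable fun k => Ψ (1 / w k)) {n : ℕ} (d : Fin n → ℝ) (hd : ∀ i, 0 ≤ d i) :
    ∑ i, d i / w i ≤ ∑ i, Φ (d i) + ∑' k, Ψ (1 / w k) :=
  calc ∑ i, d i / w i ≤ ∑ i : Fin n, (Φ (d i) + Ψ (1 / w i)) :=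
        Finset.sum_le_sum fun i _ => hY.div_le (hd i) (hw i)
    _ ≤ ∑ i, Φ (d i) + ∑' k, Ψ (1 / w k) := by
        rw [Finset.sum_add_distrib]
        gcongr
        exact sum_fin_le_tsum (fun k => hY.nonneg_right hΦ0 (one_div_nonneg.2 (hw k).le)) hΨ n

end YoungPair

theorem incr12_eq_incr1_sub (f : ℝ → ℝ → ℝ) (I J : ℝ × ℝ) :
    incr12 f I J = incr1 f I J.2 - incr1 f I J.1 := by
  simp only [incr12, incr1]
  ring

theorem incr12_eq_incr2_sub (f : ℝ → ℝ → ℝ) (I J : ℝ × ℝ) :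
    incr12 f I J = incr2 f I.2 J - incr2 f I.1 J := by
  simp only [incr12, incr2]
  ring

theorem abs_incr12_le_incr1 (f : ℝ → ℝ → ℝ) (I J : ℝ × ℝ) :
    |incr12 f I J| ≤ |incr1 f I J.1| + |incr1 f I J.2| := by
  rw [incr12_eq_incr1_sub, add_comm]
  exact abs_sub _ _

theorem abs_incr12_le_incr2 (f : ℝ → ℝ → ℝ) (I J : ℝ × ℝ) :
    |incr12 f I J| ≤ |incr2 f I.1 J| + |incr2 f I.2 J| := by
  rw [incr12_eq_incr2_sub, add_comm]
  exact abs_sub _ _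

section WeightedSums

variable {ι : Type*} [Fintype ι] (f : ℝ → ℝ → ℝ) {w : ι → ℝ}

theorem sum_abs_incr12_div_le_incr1 (I : ι → ℝ × ℝ) (J : ℝ × ℝ) (hw : ∀ i, 0 ≤ w i) :
    ∑ i, |incr12 f (I i) J| / w i ≤
      ∑ i, |incr1 f (I i) J.1| / w i + ∑ i, |incr1 f (I i) J.2| / w i := by
  rw [← Finset.sum_add_distrib]
  exact Finset.sum_le_sum fun i _ => by
    rw [← add_div]
    exact div_le_div_of_nonneg_right (abs_incr12_le_incr1 f (I i) J) (hw i)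

theorem sum_abs_incr12_div_le_incr2 (I : ℝ × ℝ) (J : ι → ℝ × ℝ) (hw : ∀ j, 0 ≤ w j) :
    ∑ j, |incr12 f I (J j)| / w j ≤
      ∑ j, |incr2 f I.1 (J j)| / w j + ∑ j, |incr2 f I.2 (J j)| / w j := by
  rw [← Finset.sum_add_distrib]
  exact Finset.sum_le_sum fun j _ => by
    rw [← add_div]
    exact div_le_div_of_nonneg_right (abs_incr12_le_incr2 f I (J j)) (hw j)

end WeightedSums

theorem sum_ofReal_le_ofReal {ι : Type*} [Fintype ι] {g : ι → ℝ} {B : ℝ} (hg : ∀ i, 0 ≤ g i)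
    (h : ∑ i, g i ≤ B) : ∑ i, ENNReal.ofReal (g i) ≤ ENNReal.ofReal B := by
  rw [← ENNReal.ofReal_sum_of_nonneg fun i _ => hg i]
  exact ENNReal.ofReal_le_ofReal h

section Variation

variable {Λ : ℕ → ℝ} {f : ℝ → ℝ → ℝ} {B : ℝ}

theorem var1_le_ofReal (hΛ : ∀ k, 0 ≤ Λ (k + 1))
    (h : ∀ (y : ℝ) (n : ℕ) (I : Fin n → ℝ × ℝ), Nonoverlapping I →
      ∑ i : Fin n, |incr1 f (I i) y| / Λ (i + 1) ≤ B) :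
    Var1 Λ f ≤ ENNReal.ofReal B :=
  iSup_le fun y => iSup_le fun n => iSup_le fun I =>
    sum_ofReal_le_ofReal (fun _ => div_nonneg (abs_nonneg _) (hΛ _)) (h y n I.1 I.2)

theorem var2_le_ofReal (hΛ : ∀ k, 0 ≤ Λ (k + 1))
    (h : ∀ (x : ℝ) (m : ℕ) (J : Fin m → ℝ × ℝ), Nonoverlapping J →
      ∑ j : Fin m, |incr2 f x (J j)| / Λ (j + 1) ≤ B) :
    Var2 Λ f ≤ ENNReal.ofReal B :=
  iSup_le fun x => iSup_le fun m => iSup_le fun J =>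
    sum_ofReal_le_ofReal (fun _ => div_nonneg (abs_nonneg _) (hΛ _)) (h x m J.1 J.2)

theorem var12_le_ofReal (hΛ : ∀ k, 0 ≤ Λ (k + 1))
    (h : ∀ (n m : ℕ) (I : Fin n → ℝ × ℝ) (J : Fin m → ℝ × ℝ), Nonoverlapping I →
      Nonoverlapping J →
      ∑ i : Fin n, ∑ j : Fin m, |incr12 f (I i) (J j)| / (Λ (i + 1) * Λ (j + 1)) ≤ B) :
    Var12 Λ f ≤ ENNReal.ofReal B := by
  refine iSup_le fun n => iSup_le fun m => iSup_le fun I => iSup_le fun J => ?_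
  rw [← Fintype.sum_prod_type']
  refine sum_ofReal_le_ofReal (fun _ => div_nonneg (abs_nonneg _) (mul_nonneg (hΛ _) (hΛ _))) ?_
  exact (Fintype.sum_prod_type' _).trans_le (h n m I.1 J.1 I.2 J.2)

end Variation

theorem harmonicSeq_succ (k : ℕ) : harmonicSeq (k + 1) = (k : ℝ) + 1 := by
  simp [harmonicSeq]

theorem harmonicSeq_succ_pos (k : ℕ) : 0 < harmonicSeq (k + 1) := by
  rw [harmonicSeq_succ]
  positivity

section Harmonic

variable {Λ : ℕ → ℝ} {f : ℝ → ℝ → ℝ}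

theorem var1_harmonicSeq_le (hΛ : ∀ k, 0 < Λ (k + 1)) {c B : ℝ}
    (hΛc : ∀ k, Λ (k + 1) ≤ c * harmonicSeq (k + 1))
    (hB : ∀ (y : ℝ) (n : ℕ) (I : Fin n → ℝ × ℝ), Nonoverlapping I →
      ∑ i : Fin n, |incr1 f (I i) y| / Λ (i + 1) ≤ B) :
    Var1 harmonicSeq f ≤ ENNReal.ofReal (c * B) := by
  have hc : 0 ≤ c := by nlinarith [hΛ 0, hΛc 0, harmonicSeq_succ_pos 0]
  exact var1_le_ofReal (fun k => (harmonicSeq_succ_pos k).le) fun y n I hI =>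
    (sum_div_le_mul_sum_div (fun _ => abs_nonneg _) (fun i : Fin n => hΛ i)
      (fun i => harmonicSeq_succ_pos i) (fun i => hΛc i)).trans
    (mul_le_mul_of_nonneg_left (hB y n I hI) hc)

theorem var2_harmonicSeq_le (hΛ : ∀ k, 0 < Λ (k + 1)) {c B : ℝ}
    (hΛc : ∀ k, Λ (k + 1) ≤ c * harmonicSeq (k + 1))
    (hB : ∀ (x : ℝ) (m : ℕ) (J : Fin m → ℝ × ℝ), Nonoverlapping J →
      ∑ j : Fin m, |incr2 f x (J j)| / Λ (j + 1) ≤ B) :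
    Var2 harmonicSeq f ≤ ENNReal.ofReal (c * B) := by
  have hc : 0 ≤ c := by nlinarith [hΛ 0, hΛc 0, harmonicSeq_succ_pos 0]
  exact var2_le_ofReal (fun k => (harmonicSeq_succ_pos k).le) fun x m J hJ =>
    (sum_div_le_mul_sum_div (fun _ => abs_nonneg _) (fun j : Fin m => hΛ j)
      (fun j => harmonicSeq_succ_pos j) (fun j => hΛc j)).trans
    (mul_le_mul_of_nonneg_left (hB x m J hJ) hc)

theorem var12_harmonicSeq_le (hΛ : ∀ k, 0 < Λ (k + 1)) {T B₁ B₂ : ℝ}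
    (hT : ∀ n, ∑ i : Fin n, Λ (i + 1) / harmonicSeq (i + 1) ^ 2 ≤ T)
    (hB₁ : ∀ (y : ℝ) (n : ℕ) (I : Fin n → ℝ × ℝ), Nonoverlapping I →
      ∑ i : Fin n, |incr1 f (I i) y| / Λ (i + 1) ≤ B₁)
    (hB₂ : ∀ (x : ℝ) (m : ℕ) (J : Fin m → ℝ × ℝ), Nonoverlapping J →
      ∑ j : Fin m, |incr2 f x (J j)| / Λ (j + 1) ≤ B₂) :
    Var12 harmonicSeq f ≤ ENNReal.ofReal ((T * (B₂ + B₂) + T * (B₁ + B₁)) / 2) := by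
  have hB₁0 : 0 ≤ B₁ := by simpa using hB₁ 0 0 Fin.elim0 ⟨nofun, nofun⟩
  have hB₂0 : 0 ≤ B₂ := by simpa using hB₂ 0 0 Fin.elim0 ⟨nofun, nofun⟩
  refine var12_le_ofReal (fun k => (harmonicSeq_succ_pos k).le) fun n m I J hI hJ => ?_
  refine sum_sum_div_mul_le (fun _ _ => abs_nonneg _) (fun i => hΛ i) (fun j => hΛ j)
    (fun i => harmonicSeq_succ_pos i) (fun j => harmonicSeq_succ_pos j) (fun j => ?_)
    (fun i => ?_) (by linarith) (by linarith) (hT n) (hT m)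
  · exact (sum_abs_incr12_div_le_incr1 f I (J j) fun i => (hΛ i).le).trans
      (add_le_add (hB₁ _ n I hI) (hB₁ _ n I hI))
  · exact (sum_abs_incr12_div_le_incr2 f (I i) J fun j => (hΛ j).le).trans
      (add_le_add (hB₂ _ m J hJ) (hB₂ _ m J hJ))

end Harmonic

theorem statement4_general (Φ Ψ : ℝ → ℝ) (hΦ0 : Φ 0 = 0)
    (hYoung : ∀ a b : ℝ, 0 ≤ a → 0 ≤ b → a * b ≤ Φ a + Ψ b)
    (Λ : ℕ → ℝ) (hΛpos : ∀ n, 0 < Λ (n + 1)) (hΛmono : ∀ n, Λ (n + 1) ≤ Λ (n + 2))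
    (hΨsum : Summable (fun n : ℕ => Ψ (1 / Λ (n + 1))))
    (hΛsum : Summable (fun n : ℕ => Λ (n + 1) / ((n : ℝ) + 1) ^ 2))
    (f : ℝ → ℝ → ℝ)
    (hΦV1 : ∃ C : ℝ, ∀ (y : ℝ) (n : ℕ) (I : Fin n → ℝ × ℝ), Nonoverlapping I →
      ∑ i : Fin n, Φ |incr1 f (I i) y| ≤ C)
    (hΦV2 : ∃ C : ℝ, ∀ (x : ℝ) (m : ℕ) (J : Fin m → ℝ × ℝ), Nonoverlapping J →
      ∑ j : Fin m, Φ |incr2 f x (J j)| ≤ C) :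
    Var1 harmonicSeq f + Var2 harmonicSeq f + Var12 harmonicSeq f < ⊤ := by
  obtain ⟨C₁, hC₁⟩ := hΦV1
  obtain ⟨C₂, hC₂⟩ := hΦV2
  set S := ∑' k : ℕ, Ψ (1 / Λ (k + 1))
  set T := ∑' k : ℕ, Λ (k + 1) / ((k : ℝ) + 1) ^ 2
  have hΛ_le : ∀ k, Λ (k + 1) ≤ 4 * T * harmonicSeq (k + 1) := fun k => by
    rw [harmonicSeq_succ]
    exact le_four_tsum_mul_of_monotone (monotone_nat_of_le_succ hΛmono)
      (fun k => (hΛpos k).le) hΛsum k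
  have hΛ_sq : ∀ n, ∑ i : Fin n, Λ (i + 1) / harmonicSeq (i + 1) ^ 2 ≤ T := fun n => by
    simp only [harmonicSeq_succ]
    exact sum_fin_le_tsum (fun k => div_nonneg (hΛpos k).le (sq_nonneg _)) hΛsum n
  have hΛV1 : ∀ y n (I : Fin n → ℝ × ℝ), Nonoverlapping I →
      ∑ i : Fin n, |incr1 f (I i) y| / Λ (i + 1) ≤ C₁ + S := fun y n I hI =>
    (YoungPair.sum_div_le hYoung hΦ0 hΛpos hΨsum _ fun _ => abs_nonneg _).trans
      (add_le_add_left (hC₁ y n I hI) S)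
  have hΛV2 : ∀ x m (J : Fin m → ℝ × ℝ), Nonoverlapping J →
      ∑ j : Fin m, |incr2 f x (J j)| / Λ (j + 1) ≤ C₂ + S := fun x m J hJ =>
    (YoungPair.sum_div_le hYoung hΦ0 hΛpos hΨsum _ fun _ => abs_nonneg _).trans
      (add_le_add_left (hC₂ x m J hJ) S)
  exact ENNReal.add_lt_top.2
    ⟨ENNReal.add_lt_top.2
      ⟨(var1_harmonicSeq_le hΛpos hΛ_le hΛV1).trans_lt ENNReal.ofReal_lt_top,
        (var2_harmonicSeq_le hΛpos hΛ_le hΛV2).trans_lt ENNReal.ofReal_lt_top⟩,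
      (var12_harmonicSeq_le hΛpos hΛ_sq hΛV1 hΛV2).trans_lt ENNReal.ofReal_lt_top⟩

/-- if `Φ, Ψ` are Young-conjugate and some nondecreasing positive sequence
`Λ = {λ_n}` with `λ_n → ∞` satisfies `∑ Ψ(1/λ_n) < ∞` and `∑ λ_n/n² < ∞`, then
`PBV_Φ ⊆ HBV`. -/
theorem statement4 (Φ Ψ : ℝ → ℝ) (hΦ0 : Φ 0 = 0)
    (hΦmono : StrictMonoOn Φ (Set.Ici (0 : ℝ)))
    (hΦcont : ContinuousOn Φ (Set.Ici (0 : ℝ)))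
    (hYoung : ∀ a b : ℝ, 0 ≤ a → 0 ≤ b → a * b ≤ Φ a + Ψ b)
    (Λ : ℕ → ℝ) (hΛpos : ∀ n, 0 < Λ (n + 1)) (hΛmono : ∀ n, Λ (n + 1) ≤ Λ (n + 2))
    (hΛtop : Tendsto (fun n : ℕ => Λ (n + 1)) atTop atTop)
    (hΨsum : Summable (fun n : ℕ => Ψ (1 / Λ (n + 1))))
    (hΛsum : Summable (fun n : ℕ => Λ (n + 1) / ((n : ℝ) + 1) ^ 2))
    (f : ℝ → ℝ → ℝ) (hper : Periodic2 f)
    (hΦV1 : ∃ C : ℝ, ∀ (y : ℝ) (n : ℕ) (I : Fin n → ℝ × ℝ), Nonoverlapping I →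
      ∑ i : Fin n, Φ |incr1 f (I i) y| ≤ C)
    (hΦV2 : ∃ C : ℝ, ∀ (x : ℝ) (m : ℕ) (J : Fin m → ℝ × ℝ), Nonoverlapping J →
      ∑ j : Fin m, Φ |incr2 f x (J j)| ≤ C) :
    Var1 harmonicSeq f + Var2 harmonicSeq f + Var12 harmonicSeq f < ⊤ :=
  statement4_general Φ Ψ hΦ0 hYoung Λ hΛpos hΛmono hΨsum hΛsum f hΦV1 hΦV2
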